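/- Let (f,F) and (f',F') be twisted automorphisms of a bialgebra H over a field k. Then their composition (f∘f', (f⊗f)(F')·F) is again a twisted automorphism of H. -/

import Mathlib

open scoped TensorProduct

noncomputable section

variable (K H : Type*) [Field K] [Ring H] [Bialgebra K H]

/-- The comultiplication of the bialgebra `H`. -/
def cm : H →ₗ[K] H ⊗[K] H := Coalgebra.comul

/-- The counit of the bialgebra `H`. -/
def cu : H →ₗ[K] K := Coalgebra.counit

/-- A twisted automorphism of the bialgebra `H` is a pair `(f, F)` where `f` is a
`K`-algebra automorphism of `H` and `F ∈ H ⊗ H` is invertible, such that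
`F·Δ(f(x)) = (f⊗f)(Δ(x))·F` for all `x`,
`(F⊗1)·(Δ⊗I)(F) = (1⊗F)·(I⊗Δ)(F)` (the 2-cocycle condition), and
`ε∘f = ε`, `(ε⊗I)(F) = 1 = (I⊗ε)(F)` (normalisation). -/
structure IsTwistedAut (f : H ≃ₐ[K] H) (F : H ⊗[K] H) : Prop where
  isUnit : IsUnit F
  conj : ∀ x : H,
    F * cm K H (f x) = Algebra.TensorProduct.map f.toAlgHom f.toAlgHom (cm K H x) * F
  cocycle : TensorProduct.assoc K H H H ((F ⊗ₜ[K] (1 : H)) * LinearMap.rTensor H (cm K H) F)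
      = ((1 : H) ⊗ₜ[K] F) * LinearMap.lTensor H (cm K H) F
  counit_comp : ∀ x : H, cu K H (f x) = cu K H x
  counit_left : TensorProduct.lid K H (LinearMap.rTensor H (cu K H) F) = 1
  counit_right : TensorProduct.rid K H (LinearMap.lTensor H (cu K H) F) = 1

/-! All maps involved (`Δ ⊗ I`, `I ⊗ Δ`, `ε ⊗ I`, `I ⊗ ε`, `f ⊗ f` and the associator) are algebra
maps, so the axioms for `G = (f ⊗ f)(F') · F` reduce to those for `F` and `F'`. The only real step
is the cocycle condition: the intertwining property of `F` lets `F ⊗ 1` pass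
`(Δ ⊗ I)((f ⊗ f)(F'))` at the cost of applying `f ⊗ f ⊗ f`, whence
`(G ⊗ 1)(Δ ⊗ I)(G) = (f ⊗ f ⊗ f)((F' ⊗ 1)(Δ ⊗ I)(F')) · (F ⊗ 1)(Δ ⊗ I)(F)`, symmetrically on the
other side, and the two cocycle conditions match the factors. -/

theorem TensorProduct.assoc_mul {R A B C : Type*} [CommSemiring R] [Semiring A] [Semiring B]
    [Semiring C] [Algebra R A] [Algebra R B] [Algebra R C] (x y : (A ⊗[R] B) ⊗[R] C) :
    TensorProduct.assoc R A B C (x * y) =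
      TensorProduct.assoc R A B C x * TensorProduct.assoc R A B C y :=
  map_mul (Algebra.TensorProduct.assoc R R R A B C) x y

theorem TensorProduct.map_map_assoc_algHom {R A B C A' B' C' : Type*} [CommSemiring R]
    [Semiring A] [Semiring B] [Semiring C] [Semiring A'] [Semiring B'] [Semiring C']
    [Algebra R A] [Algebra R B] [Algebra R C] [Algebra R A'] [Algebra R B'] [Algebra R C']
    (f : A →ₐ[R] A') (g : B →ₐ[R] B') (h : C →ₐ[R] C') (x : (A ⊗[R] B) ⊗[R] C) :
    Algebra.TensorProduct.map f (Algebra.TensorProduct.map g h) (TensorProduct.assoc R A B C x) =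
      TensorProduct.assoc R A' B' C'
        (Algebra.TensorProduct.map (Algebra.TensorProduct.map f g) h x) :=
  TensorProduct.map_map_assoc f.toLinearMap g.toLinearMap h.toLinearMap x

section

variable {K H}

def cocycleLeft (F : H ⊗[K] H) : (H ⊗[K] H) ⊗[K] H :=
  (F ⊗ₜ[K] (1 : H)) * LinearMap.rTensor H (cm K H) F

def cocycleRight (F : H ⊗[K] H) : H ⊗[K] (H ⊗[K] H) :=
  ((1 : H) ⊗ₜ[K] F) * LinearMap.lTensor H (cm K H) F

theorem IsTwistedAut.assoc_cocycleLeft {f : H ≃ₐ[K] H} {F : H ⊗[K] H}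
    (h : IsTwistedAut K H f F) :
    TensorProduct.assoc K H H H (cocycleLeft F) = cocycleRight F :=
  h.cocycle

-- The linear maps below are definitionally the algebra maps `Δ ⊗ id`, `ε ⊗ id`, etc.
theorem rTensor_cm_mul (x y : H ⊗[K] H) :
    LinearMap.rTensor H (cm K H) (x * y) =
      LinearMap.rTensor H (cm K H) x * LinearMap.rTensor H (cm K H) y :=
  map_mul (Algebra.TensorProduct.map (Bialgebra.comulAlgHom K H) (AlgHom.id K H)) x y

theorem lTensor_cm_mul (x y : H ⊗[K] H) :
    LinearMap.lTensor H (cm K H) (x * y) =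
      LinearMap.lTensor H (cm K H) x * LinearMap.lTensor H (cm K H) y :=
  map_mul (Algebra.TensorProduct.map (AlgHom.id K H) (Bialgebra.comulAlgHom K H)) x y

theorem lid_rTensor_cu_mul (x y : H ⊗[K] H) :
    TensorProduct.lid K H (LinearMap.rTensor H (cu K H) (x * y)) =
      TensorProduct.lid K H (LinearMap.rTensor H (cu K H) x) *
        TensorProduct.lid K H (LinearMap.rTensor H (cu K H) y) :=
  map_mul ((Algebra.TensorProduct.lid K H).toAlgHom.comp
    (Algebra.TensorProduct.map (Bialgebra.counitAlgHom K H) (AlgHom.id K H))) x y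

theorem rid_lTensor_cu_mul (x y : H ⊗[K] H) :
    TensorProduct.rid K H (LinearMap.lTensor H (cu K H) (x * y)) =
      TensorProduct.rid K H (LinearMap.lTensor H (cu K H) x) *
        TensorProduct.rid K H (LinearMap.lTensor H (cu K H) y) :=
  map_mul ((Algebra.TensorProduct.rid K K H).toAlgHom.comp
    (Algebra.TensorProduct.map (AlgHom.id K H) (Bialgebra.counitAlgHom K H))) x y

variable {f : H →ₐ[K] H}

theorem lid_rTensor_cu_map (hf : ∀ x, cu K H (f x) = cu K H x) (z : H ⊗[K] H) :
    TensorProduct.lid K H (LinearMap.rTensor H (cu K H) (Algebra.TensorProduct.map f f z)) =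
      f (TensorProduct.lid K H (LinearMap.rTensor H (cu K H) z)) := by
  induction z using TensorProduct.induction_on with
  | zero => simp
  | tmul a b => simp [hf a]
  | add u v hu hv => simp only [map_add, hu, hv]

theorem rid_lTensor_cu_map (hf : ∀ x, cu K H (f x) = cu K H x) (z : H ⊗[K] H) :
    TensorProduct.rid K H (LinearMap.lTensor H (cu K H) (Algebra.TensorProduct.map f f z)) =
      f (TensorProduct.rid K H (LinearMap.lTensor H (cu K H) z)) := by
  induction z using TensorProduct.induction_on with
  | zero => simp
  | tmul a b => simp [hf b]
  | add u v hu hv => simp only [map_add, hu, hv]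

variable {F : H ⊗[K] H}

theorem semiconjBy_tmul_one_rTensor_cm_map
    (hc : ∀ x, F * cm K H (f x) = Algebra.TensorProduct.map f f (cm K H x) * F) (y : H ⊗[K] H) :
    SemiconjBy (F ⊗ₜ[K] (1 : H)) (LinearMap.rTensor H (cm K H) (Algebra.TensorProduct.map f f y))
      (Algebra.TensorProduct.map (Algebra.TensorProduct.map f f) f
        (LinearMap.rTensor H (cm K H) y)) := by
  induction y using TensorProduct.induction_on with
  | zero => simp
  | tmul a b =>
    simp only [SemiconjBy, Algebra.TensorProduct.map_tmul, LinearMap.rTensor_tmul,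
      Algebra.TensorProduct.tmul_mul_tmul, one_mul, mul_one, hc a]
  | add u v hu hv => simpa only [map_add] using hu.add_right hv

theorem semiconjBy_one_tmul_lTensor_cm_map
    (hc : ∀ x, F * cm K H (f x) = Algebra.TensorProduct.map f f (cm K H x) * F) (y : H ⊗[K] H) :
    SemiconjBy ((1 : H) ⊗ₜ[K] F) (LinearMap.lTensor H (cm K H) (Algebra.TensorProduct.map f f y))
      (Algebra.TensorProduct.map f (Algebra.TensorProduct.map f f)
        (LinearMap.lTensor H (cm K H) y)) := by
  induction y using TensorProduct.induction_on with
  | zero => simp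
  | tmul a b =>
    simp only [SemiconjBy, Algebra.TensorProduct.map_tmul, LinearMap.lTensor_tmul,
      Algebra.TensorProduct.tmul_mul_tmul, one_mul, mul_one, hc b]
  | add u v hu hv => simpa only [map_add] using hu.add_right hv

theorem cocycleLeft_map_mul
    (hc : ∀ x, F * cm K H (f x) = Algebra.TensorProduct.map f f (cm K H x) * F) (F' : H ⊗[K] H) :
    cocycleLeft (Algebra.TensorProduct.map f f F' * F) =
      Algebra.TensorProduct.map (Algebra.TensorProduct.map f f) f (cocycleLeft F') *
        cocycleLeft F := by
  set G := Algebra.TensorProduct.map f f F'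
  calc (G * F) ⊗ₜ[K] (1 : H) * LinearMap.rTensor H (cm K H) (G * F)
      = G ⊗ₜ[K] (1 : H) * ((F ⊗ₜ[K] 1) * LinearMap.rTensor H (cm K H) G) *
          LinearMap.rTensor H (cm K H) F := by
        rw [rTensor_cm_mul]
        simp only [← mul_assoc, Algebra.TensorProduct.tmul_mul_tmul, one_mul]
    _ = G ⊗ₜ[K] (1 : H) * (Algebra.TensorProduct.map (Algebra.TensorProduct.map f f) f
          (LinearMap.rTensor H (cm K H) F') * (F ⊗ₜ[K] 1)) * LinearMap.rTensor H (cm K H) F := by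
        rw [(semiconjBy_tmul_one_rTensor_cm_map hc F').eq]
    _ = _ := by
        simp only [cocycleLeft, G, map_mul, Algebra.TensorProduct.map_tmul, map_one, mul_assoc]

theorem cocycleRight_map_mul
    (hc : ∀ x, F * cm K H (f x) = Algebra.TensorProduct.map f f (cm K H x) * F) (F' : H ⊗[K] H) :
    cocycleRight (Algebra.TensorProduct.map f f F' * F) =
      Algebra.TensorProduct.map f (Algebra.TensorProduct.map f f) (cocycleRight F') *
        cocycleRight F := by
  set G := Algebra.TensorProduct.map f f F'
  calc (1 : H) ⊗ₜ[K] (G * F) * LinearMap.lTensor H (cm K H) (G * F)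
      = (1 : H) ⊗ₜ[K] G * (((1 : H) ⊗ₜ[K] F) * LinearMap.lTensor H (cm K H) G) *
          LinearMap.lTensor H (cm K H) F := by
        rw [lTensor_cm_mul]
        simp only [← mul_assoc, Algebra.TensorProduct.tmul_mul_tmul, one_mul]
    _ = (1 : H) ⊗ₜ[K] G * (Algebra.TensorProduct.map f (Algebra.TensorProduct.map f f)
          (LinearMap.lTensor H (cm K H) F') * ((1 : H) ⊗ₜ[K] F)) *
          LinearMap.lTensor H (cm K H) F := by
        rw [(semiconjBy_one_tmul_lTensor_cm_map hc F').eq]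
    _ = _ := by
        simp only [cocycleRight, G, map_mul, Algebra.TensorProduct.map_tmul, map_one, mul_assoc]

end

theorem isTwistedAut_comp (f f' : H ≃ₐ[K] H) (F F' : H ⊗[K] H)
    (h : IsTwistedAut K H f F) (h' : IsTwistedAut K H f' F') :
    IsTwistedAut K H (f'.trans f)
      (Algebra.TensorProduct.map f.toAlgHom f.toAlgHom F' * F) := by
  set T := Algebra.TensorProduct.map f.toAlgHom f.toAlgHom
  have htrans : (f'.trans f).toAlgHom = f.toAlgHom.comp f'.toAlgHom := rfl
  refine ⟨(h'.isUnit.map T).mul h.isUnit, fun x => ?conj, ?cocycle,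
    fun x => ?counit_comp, ?counit_left, ?counit_right⟩
  case conj =>
    rw [htrans, Algebra.TensorProduct.map_comp, AlgHom.comp_apply]
    exact (SemiconjBy.map (h'.conj x) T).mul_left (h.conj (f' x))
  case cocycle =>
    change TensorProduct.assoc K H H H (cocycleLeft (T F' * F)) = cocycleRight (T F' * F)
    rw [cocycleLeft_map_mul h.conj, TensorProduct.assoc_mul,
      ← TensorProduct.map_map_assoc_algHom, h'.assoc_cocycleLeft, h.assoc_cocycleLeft,
      cocycleRight_map_mul h.conj]
  case counit_comp => exact (h.counit_comp (f' x)).trans (h'.counit_comp x)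
  case counit_left =>
    rw [lid_rTensor_cu_mul, lid_rTensor_cu_map h.counit_comp, h'.counit_left, h.counit_left,
      map_one, one_mul]
  case counit_right =>
    rw [rid_lTensor_cu_mul, rid_lTensor_cu_map h.counit_comp, h'.counit_right, h.counit_right,
      map_one, one_mul]

end
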